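/- Let U, V ⊆ ℂ be nonempty connected open sets and let f : U → V and g : V → U be holomorphic functions that are mutually inverse bijections (g∘f = id_U and f∘g = id_V). Let (R, π, j, F) be a standard Riemann surface (maximal standard analytical continuation) of the holomorphic function element (U, f), and let (S, ρ, ℓ, G) be a standard Riemann surface of the element (V, g), both with values in ℂ. Then F(R) = ρ(S). -/

import Mathlib

open scoped Manifold
open Set

/-- A standard analytical continuation of the holomorphic function element `(U, f)` with
values in `ℂ`. -/
structure StandardContinuation (U : Set ℂ) (f : ℂ → ℂ) where
  S : Type
  [topS : TopologicalSpace S]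
  [chartedS : ChartedSpace ℂ S]
  [analyticS : IsManifold 𝓘(ℂ, ℂ) (⊤ : WithTop ℕ∞) S]
  [t2S : T2Space S]
  [secondCountableS : SecondCountableTopology S]
  [connectedS : ConnectedSpace S]
  p : S → ℂ
  hp : MDifferentiable 𝓘(ℂ, ℂ) 𝓘(ℂ, ℂ) p
  hpnc : ¬ ∃ c : ℂ, ∀ s, p s = c
  hUrange : U ⊆ Set.range p
  j : ℂ → S
  hj : MDifferentiableOn 𝓘(ℂ, ℂ) 𝓘(ℂ, ℂ) j U
  hpj : ∀ z ∈ U, p (j z) = z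
  F : S → ℂ
  hF : MDifferentiable 𝓘(ℂ, ℂ) 𝓘(ℂ, ℂ) F
  hFj : ∀ z ∈ U, F (j z) = f z

attribute [instance] StandardContinuation.topS StandardContinuation.chartedS
  StandardContinuation.analyticS StandardContinuation.t2S
  StandardContinuation.secondCountableS StandardContinuation.connectedS

/-- A standard analytical continuation is a *standard Riemann surface* (is maximal) if
every standard analytical continuation of the same element admits a holomorphic morphism
into it. -/
def StandardContinuation.IsMaximal {U : Set ℂ} {f : ℂ → ℂ}
    (Q : StandardContinuation U f) : Prop :=
  ∀ Q' : StandardContinuation U f,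
    ∃ h : Q'.S → Q.S,
      MDifferentiable 𝓘(ℂ, ℂ) 𝓘(ℂ, ℂ) h ∧ ∀ z ∈ U, h (Q'.j z) = Q.j z

/-!
Pulling the element `(U, f)` back along `g` shows that `(R, F, j ∘ g, π)` is a standard
continuation of `(V, g)`: the roles of projection and function are swapped. Maximality of `S`
gives a holomorphic `h : R → S` with `ℓ = h ∘ j ∘ g` on `V`, so `ρ ∘ h` and `F` agree on the
image of `V`, and by the identity theorem on the connected surface `R` they agree everywhere;
hence `F(R) ⊆ ρ(S)`. The reverse inclusion is the same argument with the two elements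
exchanged.
-/

open Filter Topology

theorem tendsto_nhdsNE_of_injOn {X Y : Type*} [TopologicalSpace X] [TopologicalSpace Y]
    {k : X → Y} {s : Set X} {x : X} (hk : ContinuousAt k x) (hs : s ∈ 𝓝 x) (hinj : InjOn k s) :
    Tendsto k (𝓝[≠] x) (𝓝[≠] (k x)) := by
  refine tendsto_nhdsWithin_iff.2 ⟨hk.tendsto.mono_left nhdsWithin_le_nhds, ?_⟩
  filter_upwards [nhdsWithin_le_nhds hs, self_mem_nhdsWithin] with y hy hyx
  exact fun h => hyx (hinj hy (mem_of_mem_nhds hs) h)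

section IdentityTheorem

variable {M : Type*} [TopologicalSpace M] [ChartedSpace ℂ M]
  [IsManifold 𝓘(ℂ, ℂ) (⊤ : WithTop ℕ∞) M] {φ ψ : M → ℂ}

theorem MDifferentiable.eventuallyEq_of_frequently_eq
    (hφ : MDifferentiable 𝓘(ℂ, ℂ) 𝓘(ℂ, ℂ) φ) (hψ : MDifferentiable 𝓘(ℂ, ℂ) 𝓘(ℂ, ℂ) ψ)
    {x : M} (hfr : ∃ᶠ y in 𝓝[≠] x, φ y = ψ y) : φ =ᶠ[𝓝 x] ψ := by
  set e := chartAt ℂ x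
  have hsymm : MDifferentiableOn 𝓘(ℂ, ℂ) 𝓘(ℂ, ℂ) e.symm e.target :=
    (contMDiffOn_chart_symm (n := ⊤)).mdifferentiableOn (by simp)
  have hanalytic {χ : M → ℂ} (hχ : MDifferentiable 𝓘(ℂ, ℂ) 𝓘(ℂ, ℂ) χ) :
      AnalyticAt ℂ (χ ∘ e.symm) (e x) :=
    ((hχ.mdifferentiableOn (s := univ)).comp hsymm fun _ _ => mem_univ _).differentiableOn
      |>.analyticAt (e.open_target.mem_nhds (mem_chart_target ℂ x))
  have hsource := chart_source_mem_nhds ℂ x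
  have hfr_chart : ∃ᶠ z in 𝓝[≠] (e x), (φ ∘ e.symm) z = (ψ ∘ e.symm) z := by
    refine (tendsto_nhdsNE_of_injOn (e.continuousAt (mem_chart_source ℂ x)) hsource
      e.injOn).frequently ?_
    refine (hfr.and_eventually (nhdsWithin_le_nhds hsource)).mono fun y ⟨hy, hys⟩ => ?_
    simp [e.left_inv hys, hy]
  have heq := ((hanalytic hφ).frequently_eq_iff_eventually_eq (hanalytic hψ)).1 hfr_chart
  filter_upwards [(e.continuousAt (mem_chart_source ℂ x)).eventually heq, hsource] with y hy hys
  simpa [e.left_inv hys] using hy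

theorem MDifferentiable.eq_of_frequently_eq [ConnectedSpace M]
    (hφ : MDifferentiable 𝓘(ℂ, ℂ) 𝓘(ℂ, ℂ) φ) (hψ : MDifferentiable 𝓘(ℂ, ℂ) 𝓘(ℂ, ℂ) ψ)
    {x₀ : M} (hfr : ∃ᶠ y in 𝓝[≠] x₀, φ y = ψ y) : φ = ψ := by
  set E := {x : M | φ =ᶠ[𝓝 x] ψ}
  have hE_closed : IsClosed E := by
    refine isOpen_compl_iff.1 (isOpen_iff_mem_nhds.2 fun x hx => ?_)
    have hne : ∀ᶠ y in 𝓝[≠] x, φ y ≠ ψ y := by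
      simpa only [not_frequently] using mt (hφ.eventuallyEq_of_frequently_eq hψ) hx
    rw [← nhdsNE_sup_pure x]
    exact mem_sup.2 ⟨hne.mono fun y hy hyE => hy hyE.self_of_nhds, hx⟩
  have hE : E = univ := IsClopen.eq_univ ⟨hE_closed, isOpen_setOfPred_eventually_nhds⟩
    ⟨x₀, hφ.eventuallyEq_of_frequently_eq hψ hfr⟩
  funext x
  exact (hE ▸ mem_univ x : x ∈ E).self_of_nhds

theorem MDifferentiable.eq_of_eqOn_comp [ConnectedSpace M]
    (hφ : MDifferentiable 𝓘(ℂ, ℂ) 𝓘(ℂ, ℂ) φ) (hψ : MDifferentiable 𝓘(ℂ, ℂ) 𝓘(ℂ, ℂ) ψ)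
    {V : Set ℂ} (hV : IsOpen V) (hVne : V.Nonempty) {k : ℂ → M} (hk : ContinuousOn k V)
    (hinj : InjOn k V) (heq : EqOn (φ ∘ k) (ψ ∘ k) V) : φ = ψ := by
  obtain ⟨w₀, hw₀⟩ := hVne
  have hVw₀ := hV.mem_nhds hw₀
  refine hφ.eq_of_frequently_eq hψ (x₀ := k w₀) ?_
  have hnear : ∀ᶠ w in 𝓝[≠] w₀, (φ ∘ k) w = (ψ ∘ k) w :=
    nhdsWithin_le_nhds (mem_of_superset hVw₀ heq)
  exact (tendsto_nhdsNE_of_injOn (hk.continuousAt hVw₀) hVw₀ hinj).frequently hnear.frequently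

end IdentityTheorem

namespace StandardContinuation

variable {U V : Set ℂ} {f g : ℂ → ℂ}

def ofInverse (R : StandardContinuation U f) (hV : IsOpen V) (hVne : V.Nonempty)
    (hg : DifferentiableOn ℂ g V) (hgU : MapsTo g V U) (hfg : ∀ w ∈ V, f (g w) = w) :
    StandardContinuation V g where
  S := R.S
  p := R.F
  hp := R.hF
  hpnc := by
    rintro ⟨c, hc⟩
    obtain ⟨w₀, hw₀⟩ := hVne
    have hV_sub : V ⊆ {c} := fun w hw => by
      rw [mem_singleton_iff, ← hfg w hw, ← R.hFj _ (hgU hw), hc]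
    have hnear : ∀ᶠ w in 𝓝[≠] w₀, w ∈ V ∧ w ≠ w₀ :=
      (eventually_nhdsWithin_of_eventually_nhds (hV.eventually_mem hw₀)).and
        eventually_mem_nhdsWithin
    obtain ⟨w, hwV, hw⟩ := hnear.exists
    exact hw ((hV_sub hwV).trans (hV_sub hw₀).symm)
  hUrange w hw := ⟨R.j (g w), by rw [R.hFj _ (hgU hw), hfg w hw]⟩
  j := R.j ∘ g
  hj := R.hj.comp hg.mdifferentiableOn hgU
  hpj w hw := by simp only [Function.comp_apply, R.hFj _ (hgU hw), hfg w hw]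
  F := R.p
  hF := R.hp
  hFj w hw := R.hpj _ (hgU hw)

theorem IsMaximal.exists_map_of_inverse {S : StandardContinuation V g} (hS : S.IsMaximal)
    (R : StandardContinuation U f) (hV : IsOpen V) (hVne : V.Nonempty)
    (hg : DifferentiableOn ℂ g V) (hgU : MapsTo g V U) (hfg : ∀ w ∈ V, f (g w) = w) :
    ∃ h : R.S → S.S, S.p ∘ h = R.F ∧ S.F ∘ h = R.p := by
  obtain ⟨h, hh, hhj⟩ := hS (R.ofInverse hV hVne hg hgU hfg)
  have hhj' : ∀ w ∈ V, h (R.j (g w)) = S.j w := hhj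
  have hk : ContinuousOn (R.j ∘ g) V := R.hj.continuousOn.comp hg.continuousOn hgU
  have hinj : InjOn (R.j ∘ g) V :=
    (LeftInvOn.injOn R.hpj).comp (LeftInvOn.injOn hfg) hgU
  refine ⟨h, ?_, ?_⟩
  · refine (S.hp.comp hh).eq_of_eqOn_comp R.hF hV hVne hk hinj fun w hw => ?_
    show S.p (h (R.j (g w))) = R.F (R.j (g w))
    simp only [hhj' w hw, S.hpj w hw, R.hFj _ (hgU hw), hfg w hw]
  · refine (S.hF.comp hh).eq_of_eqOn_comp R.hp hV hVne hk hinj fun w hw => ?_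
    show S.F (h (R.j (g w))) = R.p (R.j (g w))
    simp only [hhj' w hw, S.hFj w hw, R.hpj _ (hgU hw)]

end StandardContinuation

theorem stmt_17_general (U V : Set ℂ) (hU : IsOpen U) (hUne : U.Nonempty)
    (hV : IsOpen V) (hVne : V.Nonempty)
    (f g : ℂ → ℂ)
    (hf : DifferentiableOn ℂ f U) (hg : DifferentiableOn ℂ g V)
    (hfV : MapsTo f U V) (hgU : MapsTo g V U)
    (hgf : ∀ z ∈ U, g (f z) = z) (hfg : ∀ w ∈ V, f (g w) = w)
    (R : StandardContinuation U f) (hR : R.IsMaximal)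
    (S : StandardContinuation V g) (hS : S.IsMaximal) :
    Set.range R.F = Set.range S.p := by
  obtain ⟨h, hph, -⟩ := hS.exists_map_of_inverse R hV hVne hg hgU hfg
  obtain ⟨h', -, hFh'⟩ := hR.exists_map_of_inverse S hU hUne hf hfV hgf
  refine Subset.antisymm ?_ ?_
  · rw [← hph]
    exact range_comp_subset_range h S.p
  · rw [← hFh']
    exact range_comp_subset_range h' R.F

/-- **The values of the continuation of `f` coincide with the projections of the Riemann
surface of its inverse (Lemma `inverse`).**  Let `f : U → V` and `g : V → U` be mutually
inverse holomorphic bijections between nonempty connected open subsets of `ℂ`, let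
`(R, π, j, F)` be a standard Riemann surface of `(U, f)` and `(S, ρ, ℓ, G)` a standard
Riemann surface of `(V, g)`.  Then `F(R) = ρ(S)`. -/
theorem stmt_17 (U V : Set ℂ) (hU : IsOpen U) (hUne : U.Nonempty) (hUconn : IsConnected U)
    (hV : IsOpen V) (hVne : V.Nonempty) (hVconn : IsConnected V)
    (f g : ℂ → ℂ)
    (hf : DifferentiableOn ℂ f U) (hg : DifferentiableOn ℂ g V)
    (hfV : MapsTo f U V) (hgU : MapsTo g V U)
    (hgf : ∀ z ∈ U, g (f z) = z) (hfg : ∀ w ∈ V, f (g w) = w)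
    (R : StandardContinuation U f) (hR : R.IsMaximal)
    (S : StandardContinuation V g) (hS : S.IsMaximal) :
    Set.range R.F = Set.range S.p :=
  stmt_17_general U V hU hUne hV hVne f g hf hg hfV hgU hgf hfg R hR S hS
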